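/- arXiv:1804.04498 — 4 statements merged into one kernel-verified Lean document; each statement's English description precedes it below -/
import Mathlib

section
/- The sequence (E_{2n+1}/(2n+1)!)_{n>=0} of tangent numbers divided by factorials is a Stieltjes moment sequence, i.e., there exists a positive measure mu on [0,infinity) such that E_{2n+1}/(2n+1)! = integral of x^n dmu(x) for all n >= 0. -/
/-!
Mittag-Leffler for the cotangent and `tan z = cot z - 2 cot (2z)` give the partial fraction
expansion `tan t = ∑ₖ 2aₖt / (1 - aₖt²)`, where `aₖ = (2 / ((2k+1)π))²` are the inverse squares
of the poles of `tan`. Expanding each term geometrically in `aₖt²` and exchanging the nonnegative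
double sum shows that the coefficient of `t^(2n+1)` is `∑ₖ 2aₖ^(n+1)`, the `n`-th moment of the
measure with mass `2aₖ` at each `aₖ`. Uniqueness of power series coefficients identifies it with
`E (2n+1) / (2n+1)!`.
-/

open Real MeasureTheory

open Filter Topology

theorem Complex.tan_eq_cot_sub_two_mul_cot {z : ℂ} (hz : Complex.sin (2 * z) ≠ 0) :
    Complex.tan z = Complex.cot z - 2 * Complex.cot (2 * z) := by
  rw [Complex.sin_two_mul] at hz
  have hs : Complex.sin z ≠ 0 := fun h => hz (by simp [h])
  have hc : Complex.cos z ≠ 0 := fun h => hz (by simp [h])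
  rw [Complex.tan_eq_sin_div_cos, Complex.cot_eq_cos_div_sin, Complex.cot_eq_cos_div_sin,
    Complex.sin_two_mul, Complex.cos_two_mul']
  field_simp
  ring

lemma two_mul_cotTerm_two_mul_odd (x : ℂ) (k : ℕ) :
    2 * cotTerm (2 * x) (2 * k + 1) = cotTerm x k := by
  simp only [cotTerm]
  push_cast
  rw [show 2 * x - (2 * k + 1 + 1) = 2 * (x - (k + 1)) by ring,
    show 2 * x + (2 * k + 1 + 1) = 2 * (x + (k + 1)) by ring]
  simp only [one_div, mul_inv]
  ring

lemma two_mul_cotTerm_two_mul_even {x : ℂ} (hx : 2 * x ∈ Complex.integerComplement) (k : ℕ) :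
    2 * cotTerm (2 * x) (2 * k) = -(8 * x / ((2 * k + 1) ^ 2 - 4 * x ^ 2)) := by
  have h1 := Complex.integerComplement_add_ne_zero hx (-(2 * k + 1 : ℤ))
  have h2 := Complex.integerComplement_add_ne_zero hx (2 * k + 1 : ℤ)
  push_cast at h1 h2
  rw [← sub_eq_add_neg] at h1
  have h3 : (2 * k + 1) ^ 2 - 4 * x ^ 2 ≠ 0 := by
    rw [show (2 * k + 1) ^ 2 - 4 * x ^ 2 = -((2 * x - (2 * k + 1)) * (2 * x + (2 * k + 1))) by
      ring]
    exact neg_ne_zero.2 (mul_ne_zero h1 h2)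
  simp only [cotTerm]
  push_cast
  rw [eq_neg_iff_add_eq_zero, div_add_div _ _ h1 h2, mul_div_assoc',
    div_add_div _ _ (mul_ne_zero h1 h2) h3, div_eq_zero_iff]
  left
  ring

theorem Complex.hasSum_pi_mul_tan {x : ℂ} (hx : 2 * x ∈ Complex.integerComplement) :
    HasSum (fun k : ℕ => 8 * x / ((2 * k + 1) ^ 2 - 4 * x ^ 2)) (π * Complex.tan (π * x)) := by
  have hx' : x ∈ Complex.integerComplement := by
    rintro ⟨n, hn⟩
    exact hx ⟨2 * n, by push_cast; rw [hn]⟩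
  -- The odd-indexed terms of `2 * cotTerm (2 * x)` are the terms of `cotTerm x`, so by
  -- `tan = cot - 2 cot (2 ·)` the even-indexed ones sum to `-π tan (π x)`.
  set f : ℕ → ℂ := fun m => 2 * cotTerm (2 * x) m
  have hf : HasSum f (2 * (π * Complex.cot (2 * (π * x)) - 1 / (2 * x))) := by
    rw [mul_left_comm]
    exact ((summable_cotTerm hx).hasSum_iff.2 (cot_series_rep' hx).symm).mul_left 2
  have hodd : HasSum (fun k => f (2 * k + 1)) (π * Complex.cot (π * x) - 1 / x) :=
    ((summable_cotTerm hx').hasSum_iff.2 (cot_series_rep' hx').symm).congr_fun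
      (two_mul_cotTerm_two_mul_odd x)
  have heven : HasSum (fun k => f (2 * k)) (-(π * Complex.tan (π * x))) := by
    have hs : HasSum (fun k => f (2 * k)) _ :=
      (hf.summable.comp_injective (mul_right_injective₀ two_ne_zero)).hasSum
    have hsum := (hs.even_add_odd hodd).unique hf
    have htan := Complex.tan_eq_cot_sub_two_mul_cot (z := π * x)
      (by rw [mul_left_comm]; exact sin_pi_mul_ne_zero hx)
    convert hs using 1
    linear_combination -hsum - π * htan
  rw [← neg_neg (π * Complex.tan (π * x))]
  exact heven.neg.congr_fun fun k => by simp only [f, two_mul_cotTerm_two_mul_even hx, neg_neg]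

theorem hasSum_tsum_swap_of_nonneg {β γ : Type*} {f : β → γ → ℝ} (hf : ∀ b c, 0 ≤ f b c)
    {g : β → ℝ} {a : ℝ} (hrow : ∀ b, HasSum (f b) (g b)) (hg : HasSum g a) :
    HasSum (fun c => ∑' b, f b c) a := by
  have hF : Summable fun p : β × γ => f p.1 p.2 :=
    (summable_prod_of_nonneg fun p => hf p.1 p.2).2
      ⟨fun b => (hrow b).summable, by simpa only [(hrow _).tsum_eq] using hg.summable⟩
  have hsum : HasSum (fun p : β × γ => f p.1 p.2) a := by
    rw [← (hF.hasSum.prod_fiberwise hrow).unique hg]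
    exact hF.hasSum
  exact ((Equiv.prodComm γ β).hasSum_iff.2 hsum).prod_fiberwise fun c =>
    (hF.prod_symm.prod_factor c).hasSum

theorem eq_zero_of_hasSum_pow_eq_zero {c : ℕ → ℝ} {r : ℝ} (hr : 0 < r)
    (h : ∀ t, |t| < r → HasSum (fun n => c n * t ^ n) 0) : c = 0 := by
  obtain ⟨ρ, hρ0, hρr⟩ : ∃ ρ : NNReal, 0 < ρ ∧ (ρ : ℝ) < r :=
    ⟨(r / 2).toNNReal, by simpa using hr, by rw [Real.coe_toNNReal _ (by positivity)]; linarith⟩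
  have hp : HasFPowerSeriesOnBall (0 : ℝ → ℝ) (.ofScalars ℝ c) 0 ρ := by
    refine ⟨?_, by simpa using hρ0, fun {y} hy => ?_⟩
    · refine FormalMultilinearSeries.le_radius_of_tendsto _ (l := 0) ?_
      simpa [FormalMultilinearSeries.ofScalars_norm, abs_mul] using
        (h ρ (by rwa [NNReal.abs_eq])).summable.tendsto_atTop_zero.norm
    · have hy' : |y| < r := by
        rw [Metric.mem_eball, edist_zero_right, enorm_eq_nnnorm, ENNReal.coe_lt_coe,
          ← NNReal.coe_lt_coe, coe_nnnorm, Real.norm_eq_abs] at hy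
        linarith
      simpa [FormalMultilinearSeries.ofScalars_apply_eq, mul_comm] using h y hy'
  exact (FormalMultilinearSeries.ofScalars_series_eq_zero ℝ).1 hp.hasFPowerSeriesAt.eq_zero

theorem eq_of_hasSum_odd_pow {a b : ℕ → ℝ} {f : ℝ → ℝ} {r : ℝ} (hr : 0 < r)
    (ha : ∀ t, |t| < r → HasSum (fun n => a n * t ^ (2 * n + 1)) (f t))
    (hb : ∀ t, |t| < r → HasSum (fun n => b n * t ^ (2 * n + 1)) (f t)) : a = b := by
  have hodd : Function.Injective fun n : ℕ => 2 * n + 1 := fun i j h => by simpa using h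
  set c : ℕ → ℝ := Function.extend (fun n => 2 * n + 1) (a - b) 0
  have hc : c = 0 := by
    refine eq_zero_of_hasSum_pow_eq_zero hr fun t ht => ?_
    refine (hodd.hasSum_iff fun m hm => ?_).1 ?_
    · simp [c, Function.extend_apply' _ _ _ fun ⟨n, hn⟩ => hm ⟨n, hn⟩]
    · simpa [c, Function.comp_def, hodd.extend_apply, sub_mul] using (ha t ht).sub (hb t ht)
  funext n
  have := congrFun hc (2 * n + 1)
  simp only [c, hodd.extend_apply] at this
  exact sub_eq_zero.1 this

noncomputable def tanAtom (k : ℕ) : ℝ := (2 / ((2 * k + 1) * π)) ^ 2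

lemma tanAtom_pos (k : ℕ) : 0 < tanAtom k := by
  unfold tanAtom
  positivity

lemma tanAtom_mul_sq_lt_one {t : ℝ} (ht : |t| < π / 2) (k : ℕ) : tanAtom k * t ^ 2 < 1 := by
  have hk : (1 : ℝ) ≤ 2 * k + 1 := by linarith [(Nat.cast_nonneg k : (0 : ℝ) ≤ k)]
  have hlt : 2 * |t| < (2 * k + 1) * π := by nlinarith [pi_pos]
  rw [tanAtom, ← mul_pow, ← sq_abs, abs_mul, abs_of_pos (by positivity)]
  refine pow_lt_one₀ (by positivity) ?_ two_ne_zero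
  rw [div_mul_eq_mul_div, div_lt_one (by positivity)]
  exact hlt

lemma tanAtom_le_one (k : ℕ) : tanAtom k ≤ 1 := by
  simpa using (tanAtom_mul_sq_lt_one (t := 1) (by rw [abs_one]; linarith [pi_gt_three]) k).le

lemma summable_tanAtom_pow (n : ℕ) : Summable fun k => tanAtom k ^ (n + 1) := by
  have hodd := (Real.summable_one_div_nat_pow.2 one_lt_two).comp_injective
    (i := fun k : ℕ => 2 * k + 1) fun i j h => by simpa using h
  refine Summable.of_nonneg_of_le (fun k => (pow_pos (tanAtom_pos k) _).le) (fun k => ?_)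
    (hodd.mul_left ((2 / π) ^ 2))
  calc tanAtom k ^ (n + 1) ≤ tanAtom k := pow_le_of_le_one (tanAtom_pos k).le (tanAtom_le_one k)
        n.succ_ne_zero
    _ = (2 / π) ^ 2 * (1 / ((2 * k + 1 : ℕ) : ℝ) ^ 2) := by
        rw [tanAtom]
        push_cast
        field_simp

theorem Real.hasSum_tan_partialFraction {t : ℝ} (ht : |t| < π / 2) :
    HasSum (fun k => t * (2 * tanAtom k / (1 - tanAtom k * t ^ 2))) (Real.tan t) := by
  rcases eq_or_ne t 0 with rfl | ht0
  · simp
  have h2x : 2 * ((t / π : ℝ) : ℂ) ∈ Complex.integerComplement := by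
    rintro ⟨n, hn⟩
    have hn' : (n : ℝ) = 2 * (t / π) := by exact_mod_cast hn
    have hlt : |(n : ℝ)| < 1 := by
      rw [hn', abs_mul, abs_div, abs_two, abs_of_pos pi_pos, mul_div_assoc', div_lt_one pi_pos]
      linarith
    have hn0 : n = 0 := Int.abs_lt_one_iff.1 (by exact_mod_cast hlt)
    rw [hn0, Int.cast_zero, eq_comm] at hn'
    exact ht0 (by simpa [pi_ne_zero] using hn')
  have hterm (k : ℕ) : π * (t * (2 * tanAtom k / (1 - tanAtom k * t ^ 2))) =
      8 * (t / π) / ((2 * k + 1) ^ 2 - 4 * (t / π) ^ 2) := by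
    have hk := (tanAtom_mul_sq_lt_one ht k).ne'
    rw [tanAtom] at hk ⊢
    field_simp
    ring
  have hπtan : HasSum (fun k => π * (t * (2 * tanAtom k / (1 - tanAtom k * t ^ 2))))
      (π * Real.tan t) := by
    refine Complex.hasSum_ofReal.1 ?_
    have hval : (π : ℂ) * Complex.tan (π * ((t / π : ℝ) : ℂ)) = ((π * Real.tan t : ℝ) : ℂ) := by
      rw [← Complex.ofReal_mul, ← Complex.ofReal_tan, mul_div_cancel₀ _ pi_ne_zero,
        Complex.ofReal_mul]
    rw [← hval]
    refine (Complex.hasSum_pi_mul_tan h2x).congr_fun fun k => ?_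
    rw [hterm]
    push_cast
    ring
  simpa [pi_ne_zero] using hπtan.div_const π

noncomputable def tanMeasure : Measure ℝ :=
  Measure.sum fun k => ENNReal.ofReal (2 * tanAtom k) • Measure.dirac (tanAtom k)

lemma tanMeasure_Iio : tanMeasure (Set.Iio 0) = 0 := by
  simp [tanMeasure, Measure.sum_apply _ measurableSet_Iio, (tanAtom_pos _).le]

lemma summable_tanMeasure_weight_mul_norm_pow (n : ℕ) :
    Summable fun k => (ENNReal.ofReal (2 * tanAtom k)).toReal * ‖tanAtom k ^ n‖ := by
  refine ((summable_tanAtom_pow n).mul_left 2).congr fun k => ?_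
  rw [ENNReal.toReal_ofReal (by linarith [tanAtom_pos k]), norm_pow,
    Real.norm_of_nonneg (tanAtom_pos k).le]
  ring

lemma integrable_pow_tanMeasure (n : ℕ) : Integrable (fun x : ℝ => x ^ n) tanMeasure :=
  integrable_sum_dirac (fun _ => ENNReal.ofReal_ne_top) (summable_tanMeasure_weight_mul_norm_pow n)

lemma hasSum_integral_pow_tanMeasure (n : ℕ) :
    HasSum (fun k => 2 * tanAtom k ^ (n + 1)) (∫ x, x ^ n ∂tanMeasure) := by
  refine (hasSum_integral_sum_dirac (f := fun x : ℝ => x ^ n) (fun _ => ENNReal.ofReal_ne_top)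
    (summable_tanMeasure_weight_mul_norm_pow n)).congr_fun fun k => ?_
  rw [ENNReal.toReal_ofReal (by linarith [tanAtom_pos k]), smul_eq_mul]
  ring

theorem hasSum_integral_pow_mul_pow_tan {t : ℝ} (ht : |t| < π / 2) :
    HasSum (fun n => (∫ x, x ^ n ∂tanMeasure) * t ^ (2 * n + 1)) (Real.tan t) := by
  rcases eq_or_ne t 0 with rfl | ht0
  · simp
  have hrow (k : ℕ) : HasSum (fun n => 2 * tanAtom k ^ (n + 1) * (t ^ 2) ^ n)
      (2 * tanAtom k / (1 - tanAtom k * t ^ 2)) := by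
    rw [div_eq_mul_inv]
    refine ((hasSum_geometric_of_lt_one (by positivity [tanAtom_pos k])
      (tanAtom_mul_sq_lt_one ht k)).mul_left (2 * tanAtom k)).congr_fun fun n => ?_
    ring
  have hcol := hasSum_tsum_swap_of_nonneg
    (fun k n => by positivity [tanAtom_pos k]) hrow
    (by simpa only [mul_div_cancel_left₀ _ ht0] using
      (Real.hasSum_tan_partialFraction ht).div_const t)
  rw [← mul_div_cancel₀ (Real.tan t) ht0]
  refine (hcol.mul_left t).congr_fun fun n => ?_
  rw [tsum_mul_right, (hasSum_integral_pow_tanMeasure n).tsum_eq]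
  ring

theorem tangent_numbers_stieltjes (E : ℕ → ℝ)
    (hE : ∀ t : ℝ, |t| < π / 2 →
      HasSum (fun n : ℕ => E (2 * n + 1) * t ^ (2 * n + 1) / ((2 * n + 1).factorial : ℝ))
        (Real.tan t)) :
    ∃ μ : Measure ℝ, μ {x : ℝ | x < 0} = 0 ∧
      ∀ n : ℕ, Integrable (fun x : ℝ => x ^ n) μ ∧
        E (2 * n + 1) / ((2 * n + 1).factorial : ℝ) = ∫ x : ℝ, x ^ n ∂μ := by
  refine ⟨tanMeasure, tanMeasure_Iio, fun n => ⟨integrable_pow_tanMeasure n, ?_⟩⟩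
  have hmoments := eq_of_hasSum_odd_pow (by positivity)
    (fun t ht => by simpa only [mul_div_right_comm] using hE t ht)
    (fun t ht => hasSum_integral_pow_mul_pow_tan ht)
  exact congrFun hmoments n
end

section
/- If (a_n)_{n>=0} and (b_n)_{n>=0} are Hamburger moment sequences, then their entrywise product (a_n * b_n)_{n>=0} is also a Hamburger moment sequence. -/
/-! Moments of the product of two independent variables are the products of their moments: the
image of `μ.prod ν` under `(x, y) ↦ x * y` represents the entrywise product. The moment of order
zero is the total mass, so representing measures are finite, which makes the product measure
and Fubini available. -/

open Real MeasureTheory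

/-- `a` is a Hamburger moment sequence: it is represented by a positive
measure on `ℝ`. -/
def IsHamburgerMomentSeq (a : ℕ → ℝ) : Prop :=
  ∃ μ : Measure ℝ,
    ∀ n : ℕ, Integrable (fun x : ℝ => x ^ n) μ ∧ a n = ∫ x : ℝ, x ^ n ∂μ

section MomentsOfProduct

variable {𝕜 : Type*} [RCLike 𝕜] [MeasurableSpace 𝕜] [BorelSpace 𝕜]
  {μ ν : Measure 𝕜} (n : ℕ)

lemma integrable_pow_map_mul [SFinite ν] (hμ : Integrable (fun x => x ^ n) μ)
    (hν : Integrable (fun x => x ^ n) ν) :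
    Integrable (fun x => x ^ n) ((μ.prod ν).map fun p => p.1 * p.2) := by
  rw [integrable_map_measure (by fun_prop) (by fun_prop)]
  simpa only [Function.comp_def, mul_pow] using hμ.mul_prod hν

lemma integral_pow_map_mul [SFinite μ] [SFinite ν] :
    ∫ x, x ^ n ∂(μ.prod ν).map (fun p => p.1 * p.2) = (∫ x, x ^ n ∂μ) * ∫ x, x ^ n ∂ν := by
  rw [integral_map (by fun_prop) (by fun_prop)]
  simp only [mul_pow]
  exact integral_prod_mul (fun x => x ^ n) (fun y => y ^ n)

end MomentsOfProduct

lemma IsHamburgerMomentSeq.exists_isFiniteMeasure {a : ℕ → ℝ} (ha : IsHamburgerMomentSeq a) :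
    ∃ μ : Measure ℝ, IsFiniteMeasure μ ∧
      ∀ n : ℕ, Integrable (fun x : ℝ => x ^ n) μ ∧ a n = ∫ x : ℝ, x ^ n ∂μ := by
  obtain ⟨μ, hμ⟩ := ha
  have hμ₀ : Integrable (fun _ => (1 : ℝ)) μ := by simpa only [pow_zero] using (hμ 0).1
  exact ⟨μ, (integrable_const_iff_isFiniteMeasure one_ne_zero).1 hμ₀, hμ⟩

theorem hamburger_entrywise_product
    (a b : ℕ → ℝ) (ha : IsHamburgerMomentSeq a) (hb : IsHamburgerMomentSeq b) :
    IsHamburgerMomentSeq (fun n : ℕ => a n * b n) := by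
  obtain ⟨μ, _, hμ⟩ := ha.exists_isFiniteMeasure
  obtain ⟨ν, _, hν⟩ := hb.exists_isFiniteMeasure
  refine ⟨(μ.prod ν).map fun p => p.1 * p.2, fun n => ⟨?_, ?_⟩⟩
  · exact integrable_pow_map_mul n (hμ n).1 (hν n).1
  · rw [integral_pow_map_mul, ← (hμ n).2, ← (hν n).2]
end

section
/- If (a_n)_{n>=0} and (b_n)_{n>=0} are Stieltjes moment sequences, then (a_n * b_n)_{n>=0} is a Stieltjes moment sequence. -/
open Real MeasureTheory

/-!
If `μ` and `ν` represent `a` and `b`, then `(a n * b n)` is represented by the multiplicative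
convolution `μ ∗ₘ ν`, the law of `X * Y` for independent `X ∼ μ`, `Y ∼ ν`: it is again carried by
`[0, ∞)`, and its moments factor because `x ↦ x ^ n` is multiplicative.
-/

/-- `a` is a Stieltjes moment sequence: it is represented by a positive
measure on `[0,∞)`. -/
def IsStieltjesMomentSeq (a : ℕ → ℝ) : Prop :=
  ∃ μ : Measure ℝ, μ {x : ℝ | x < 0} = 0 ∧
    ∀ n : ℕ, Integrable (fun x : ℝ => x ^ n) μ ∧ a n = ∫ x : ℝ, x ^ n ∂μ

namespace MeasureTheory.Measure

variable {M : Type*} [Monoid M] [MeasurableSpace M] [MeasurableMul₂ M] {μ ν : Measure M}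

lemma ae_mem_mconv [SFinite ν] {S : Set M} (hS : MeasurableSet S)
    (hmul : ∀ x ∈ S, ∀ y ∈ S, x * y ∈ S) (hμ : ∀ᵐ x ∂μ, x ∈ S) (hν : ∀ᵐ y ∂ν, y ∈ S) :
    ∀ᵐ z ∂(μ ∗ₘ ν), z ∈ S := by
  refine (ae_map_iff (by fun_prop) hS).2 ?_
  filter_upwards [quasiMeasurePreserving_fst.ae hμ, quasiMeasurePreserving_snd.ae hν]
    with p hp₁ hp₂ using hmul _ hp₁ _ hp₂

variable {𝕜 : Type*} [RCLike 𝕜] (χ : M →* 𝕜)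

lemma integrable_mconv_of_monoidHom (hχ : Measurable χ) (hμ : Integrable χ μ)
    (hν : Integrable χ ν) : Integrable χ (μ ∗ₘ ν) := by
  rw [mconv, integrable_map_measure hχ.aestronglyMeasurable (by fun_prop)]
  simpa only [Function.comp_def, map_mul] using hμ.mul_prod hν

lemma integral_mconv_monoidHom [SFinite μ] [SFinite ν] (hχ : Measurable χ) :
    ∫ z, χ z ∂(μ ∗ₘ ν) = (∫ x, χ x ∂μ) * ∫ y, χ y ∂ν := by
  rw [mconv, integral_map (by fun_prop) hχ.aestronglyMeasurable]
  simpa only [map_mul] using integral_prod_mul (μ := μ) (ν := ν) χ χ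

end MeasureTheory.Measure

lemma isFiniteMeasure_of_integrable_pow_zero {μ : Measure ℝ}
    (h : Integrable (fun x : ℝ => x ^ 0) μ) : IsFiniteMeasure μ :=
  (integrable_const_iff_isFiniteMeasure one_ne_zero).mp (by simpa using h)

lemma ae_nonneg_iff_measure_neg_eq_zero {μ : Measure ℝ} :
    (∀ᵐ x ∂μ, 0 ≤ x) ↔ μ {x : ℝ | x < 0} = 0 := by
  simp [ae_iff]

open Measure in
theorem stieltjes_entrywise_product
    (a b : ℕ → ℝ) (ha : IsStieltjesMomentSeq a) (hb : IsStieltjesMomentSeq b) :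
    IsStieltjesMomentSeq (fun n : ℕ => a n * b n) := by
  obtain ⟨μ, hμ_neg, hμ⟩ := ha
  obtain ⟨ν, hν_neg, hν⟩ := hb
  have := isFiniteMeasure_of_integrable_pow_zero (hμ 0).1
  have := isFiniteMeasure_of_integrable_pow_zero (hν 0).1
  have h_nonneg : ∀ᵐ z ∂(μ ∗ₘ ν), 0 ≤ z :=
    ae_mem_mconv measurableSet_Ici (fun _ hx _ hy => Set.mem_Ici.2 (mul_nonneg hx hy))
      (ae_nonneg_iff_measure_neg_eq_zero.2 hμ_neg) (ae_nonneg_iff_measure_neg_eq_zero.2 hν_neg)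
  have h_pow_meas (n : ℕ) : Measurable (powMonoidHom n : ℝ →* ℝ) := (continuous_pow n).measurable
  refine ⟨μ ∗ₘ ν, ae_nonneg_iff_measure_neg_eq_zero.1 h_nonneg, fun n => ⟨?_, ?_⟩⟩
  · exact integrable_mconv_of_monoidHom _ (h_pow_meas n) (hμ n).1 (hν n).1
  · calc a n * b n = (∫ x, x ^ n ∂μ) * ∫ y, y ^ n ∂ν := by rw [(hμ n).2, (hν n).2]
      _ = ∫ z, z ^ n ∂(μ ∗ₘ ν) := (integral_mconv_monoidHom _ (h_pow_meas n)).symm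
end

section
/- For all n >= 0, the Springer number S_n equals (1/(2*sqrt(2))) times the integral over R of y^n * e^{(pi/4)y} / cosh(pi*y/2) dy; consequently (S_n)_{n>=0} is a Hamburger moment sequence. -/
open Real MeasureTheory ProbabilityTheory Set Filter
open scoped NNReal Nat Topology

/-!
The function `y ↦ exp (π y / 4) / (2 √2 cosh (π y / 2))` is the density of a measure whose
moment generating function is `∫ exp (t y) dμ = 1 / (cos t - sin t)` for `|t + π / 4| < π / 2`:
the substitution `x = sigmoid (π y)` turns this integral into Euler's Beta integral
`B(a, 1 - a) = Γ(a) Γ(1 - a) = π / sin (π a)`. A moment generating function that is finite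
near `0` is analytic there, with Taylor coefficients the moments divided by `n!`; uniqueness of
power series coefficients then identifies `S n` with the `n`-th moment.
-/

open FormalMultilinearSeries in
theorem hasFPowerSeriesOnBall_ofScalars_of_hasSum {𝕜 : Type*} [RCLike 𝕜]
    {c : ℕ → 𝕜} {f : 𝕜 → 𝕜} {r : ℝ≥0} (hr : 0 < r)
    (h : ∀ t : 𝕜, ‖t‖ < r → HasSum (fun n => c n * t ^ n) (f t)) :
    HasFPowerSeriesOnBall f (ofScalars 𝕜 c) 0 r where
  r_le := by
    refine ENNReal.le_of_forall_nnreal_lt fun r' hr' =>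
      (ofScalars 𝕜 c).le_radius_of_tendsto (l := 0) ?_
    have hterms := (h ((r' : ℝ) : 𝕜) (by simpa using hr')).summable.tendsto_atTop_zero.norm
    simpa [ofScalars_norm] using hterms
  r_pos := mod_cast hr
  hasSum {t} ht := by
    rw [zero_add, ofScalars_apply_eq']
    exact h t (by simpa using ht)

theorem integral_Ioo_rpow_mul_one_sub_rpow {a b : ℝ} (ha : 0 < a) (hb : 0 < b) :
    ∫ x in Ioo (0 : ℝ) 1, x ^ (a - 1) * (1 - x) ^ (b - 1) =
      Gamma a * Gamma b / Gamma (a + b) := by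
  apply Complex.ofReal_injective
  have hbeta := Complex.betaIntegral_eq_Gamma_mul_div a b (by simpa using ha) (by simpa using hb)
  rw [Complex.betaIntegral, intervalIntegral.integral_of_le zero_le_one,
    integral_Ioc_eq_integral_Ioo] at hbeta
  push_cast [← Complex.Gamma_ofReal]
  rw [← hbeta, ← integral_complex_ofReal]
  refine setIntegral_congr_fun measurableSet_Ioo fun x hx => ?_
  push_cast [Complex.ofReal_cpow hx.1.le, Complex.ofReal_cpow (sub_nonneg.2 hx.2.le)]
  rfl

theorem integral_sigmoid_rpow_mul_one_sub_sigmoid_rpow {a b : ℝ} (ha : 0 < a) (hb : 0 < b) :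
    ∫ y, sigmoid y ^ a * (1 - sigmoid y) ^ b = Gamma a * Gamma b / Gamma (a + b) := by
  have hsubst := integral_image_eq_integral_abs_deriv_smul MeasurableSet.univ
    (fun y _ => (hasDerivAt_sigmoid y).hasDerivWithinAt) sigmoid_injective.injOn
    (fun x => x ^ (a - 1) * (1 - x) ^ (b - 1))
  rw [image_univ, range_sigmoid, integral_Ioo_rpow_mul_one_sub_rpow ha hb,
    Measure.restrict_univ] at hsubst
  rw [hsubst]
  congr 1 with y
  have hσ := sigmoid_pos y
  have hσ' : 0 < 1 - sigmoid y := sub_pos.2 (sigmoid_lt_one y)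
  rw [smul_eq_mul, abs_of_pos (mul_pos hσ hσ'), rpow_sub_one hσ.ne', rpow_sub_one hσ'.ne']
  field_simp

theorem integral_exp_mul_div_one_add_exp {a : ℝ} (ha₀ : 0 < a) (ha₁ : a < 1) :
    ∫ y, exp (a * y) / (1 + exp y) = π / sin (π * a) := by
  have hbeta := integral_sigmoid_rpow_mul_one_sub_sigmoid_rpow ha₀ (sub_pos.2 ha₁)
  rw [add_sub_cancel, Gamma_one, div_one, Gamma_mul_Gamma_one_sub] at hbeta
  rw [← hbeta]
  congr 1 with y
  have hσ' : 0 < 1 - sigmoid y := sub_pos.2 (sigmoid_lt_one y)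
  have hσ : sigmoid y = exp y * (1 - sigmoid y) := by
    rw [← sigmoid_neg, ← sigmoid_mul_rexp_neg, mul_comm, mul_assoc, ← exp_add, neg_add_cancel,
      exp_zero, mul_one]
  calc exp (a * y) / (1 + exp y) = exp (a * y) * (1 - sigmoid y) := by
        rw [← sigmoid_neg, sigmoid_def, neg_neg, div_eq_mul_inv]
    _ = (exp y * (1 - sigmoid y)) ^ a * (1 - sigmoid y) ^ (1 - a) := by
        rw [mul_rpow (exp_pos y).le hσ'.le, ← exp_mul, mul_assoc, ← rpow_add hσ',
          add_sub_cancel, rpow_one, mul_comm y a]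
    _ = sigmoid y ^ a * (1 - sigmoid y) ^ (1 - a) := by rw [← hσ]

theorem integral_exp_mul_div_cosh {c : ℝ} (hc : |c| < π / 2) :
    ∫ y, exp (c * y) / cosh (π * y / 2) = 2 / cos c := by
  set a := c / π + 1 / 2 with ha
  obtain ⟨hc₀, hc₁⟩ := abs_lt.1 hc
  have ha₀ : 0 < a := by
    rw [ha, ← neg_lt_iff_pos_add, neg_lt, ← neg_div, div_lt_iff₀ pi_pos]
    linarith
  have ha₁ : a < 1 := by
    rw [ha, ← lt_sub_iff_add_lt, div_lt_iff₀ pi_pos]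
    linarith
  have hpointwise (y : ℝ) :
      exp (c * y) / cosh (π * y / 2) = 2 * (exp (a * (π * y)) / (1 + exp (π * y))) := by
    have hca : a * (π * y) = c * y + π * y / 2 := by
      rw [ha]; field_simp
    have hsq : exp (π * y) = exp (π * y / 2) * exp (π * y / 2) := by rw [← exp_add]; ring_nf
    rw [cosh_eq, hca, exp_add, hsq, exp_neg]
    field_simp
    ring
  have hsin : sin (π * a) = cos c := by
    rw [ha, mul_add, mul_div_cancel₀ _ pi_pos.ne', mul_one_div, sin_add_pi_div_two]
  simp_rw [hpointwise]
  rw [integral_const_mul, Measure.integral_comp_mul_left (fun z => exp (a * z) / (1 + exp z)),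
    integral_exp_mul_div_one_add_exp ha₀ ha₁, hsin, abs_of_pos (inv_pos.2 pi_pos), smul_eq_mul]
  field_simp

-- A non-integrable function has Bochner integral `0`.
theorem integrable_exp_mul_div_cosh {c : ℝ} (hc : |c| < π / 2) :
    Integrable fun y => exp (c * y) / cosh (π * y / 2) :=
  .of_integral_ne_zero <| by
    rw [integral_exp_mul_div_cosh hc]
    exact div_ne_zero two_ne_zero (cos_pos_of_mem_Ioo (abs_lt.1 hc)).ne'

noncomputable def springerDensity (y : ℝ) : ℝ :=
  exp (π / 4 * y) / cosh (π * y / 2) / (2 * √2)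

noncomputable def springerMeasure : Measure ℝ :=
  volume.withDensity fun y => ENNReal.ofReal (springerDensity y)

lemma measurable_springerDensity : Measurable springerDensity := by
  unfold springerDensity
  fun_prop

lemma toReal_ofReal_springerDensity_smul (f : ℝ → ℝ) (y : ℝ) :
    (ENNReal.ofReal (springerDensity y)).toReal • f y =
      1 / (2 * √2) * (f y * exp (π / 4 * y) / cosh (π * y / 2)) := by
  rw [ENNReal.toReal_ofReal (by unfold springerDensity; positivity), smul_eq_mul, springerDensity]
  ring

theorem integral_springerMeasure (f : ℝ → ℝ) :
    ∫ x, f x ∂springerMeasure =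
      1 / (2 * √2) * ∫ y, f y * exp (π / 4 * y) / cosh (π * y / 2) := by
  rw [springerMeasure, integral_withDensity_eq_integral_toReal_smul
    measurable_springerDensity.ennreal_ofReal (by simp), ← integral_const_mul]
  simp_rw [toReal_ofReal_springerDensity_smul]

theorem integrable_springerMeasure_iff {f : ℝ → ℝ} :
    Integrable f springerMeasure ↔
      Integrable fun y => f y * exp (π / 4 * y) / cosh (π * y / 2) := by
  rw [springerMeasure, integrable_withDensity_iff_integrable_smul'
    measurable_springerDensity.ennreal_ofReal (by simp)]
  simp_rw [toReal_ofReal_springerDensity_smul]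
  exact integrable_const_mul_iff (isUnit_iff_ne_zero.2 (by positivity)) _

lemma exp_mul_mul_exp_div_cosh (t y : ℝ) :
    exp (t * y) * exp (π / 4 * y) / cosh (π * y / 2) =
      exp ((t + π / 4) * y) / cosh (π * y / 2) := by
  rw [← exp_add, add_mul]

theorem integrable_exp_mul_springerMeasure {t : ℝ} (ht : |t + π / 4| < π / 2) :
    Integrable (fun x => exp (t * x)) springerMeasure := by
  rw [integrable_springerMeasure_iff]
  simpa only [exp_mul_mul_exp_div_cosh] using integrable_exp_mul_div_cosh ht

theorem mgf_springerMeasure {t : ℝ} (ht : |t + π / 4| < π / 2) :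
    mgf id springerMeasure t = 1 / (cos t - sin t) := by
  have hcos : cos (t + π / 4) = (cos t - sin t) * (√2 / 2) := by
    rw [cos_add, cos_pi_div_four, sin_pi_div_four]
    ring
  have hpos : 0 < cos t - sin t :=
    pos_of_mul_pos_left (hcos ▸ cos_pos_of_mem_Ioo (abs_lt.1 ht)) (by positivity)
  rw [mgf, integral_springerMeasure]
  simp_rw [id, exp_mul_mul_exp_div_cosh]
  rw [integral_exp_mul_div_cosh ht, hcos]
  field_simp
  exact (sq_sqrt zero_le_two).symm

lemma setOf_abs_add_pi_div_four_lt_mem_nhds_zero :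
    {t : ℝ | |t + π / 4| < π / 2} ∈ 𝓝 0 := by
  refine (isOpen_lt (by fun_prop) continuous_const).mem_nhds ?_
  rw [mem_ofPred_eq, zero_add, abs_of_pos (by positivity)]
  linarith [pi_pos]

theorem zero_mem_interior_integrableExpSet_springerMeasure :
    0 ∈ interior (integrableExpSet id springerMeasure) :=
  mem_interior_iff_mem_nhds.2 <| mem_of_superset setOf_abs_add_pi_div_four_lt_mem_nhds_zero
    fun _ ht => integrable_exp_mul_springerMeasure ht

theorem hasFPowerSeriesAt_one_div_cos_sub_sin_moments :
    HasFPowerSeriesAt (fun t => 1 / (cos t - sin t))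
      (FormalMultilinearSeries.ofScalars ℝ fun n => (∫ x, x ^ n ∂springerMeasure) / n !)
      0 := by
  have hmgf := hasFPowerSeriesAt_mgf zero_mem_interior_integrableExpSet_springerMeasure
  simp only [zero_mul, exp_zero, mul_one, id] at hmgf
  refine hmgf.congr ?_
  filter_upwards [setOf_abs_add_pi_div_four_lt_mem_nhds_zero] with t ht
  exact mgf_springerMeasure ht

theorem springer_numbers_integral_representation (S : ℕ → ℝ)
    (hS : ∀ t : ℝ, |t| < π / 4 →
      HasSum (fun n : ℕ => S n * t ^ n / (n.factorial : ℝ))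
        (1 / (Real.cos t - Real.sin t))) :
    (∀ n : ℕ,
      S n = (1 / (2 * Real.sqrt 2)) *
        ∫ y : ℝ, y ^ n * Real.exp (π / 4 * y) / Real.cosh (π * y / 2)) ∧
    ∃ μ : Measure ℝ,
      ∀ n : ℕ, Integrable (fun x : ℝ => x ^ n) μ ∧ S n = ∫ x : ℝ, x ^ n ∂μ := by
  have hS_series : HasFPowerSeriesAt (fun t => 1 / (cos t - sin t))
      (FormalMultilinearSeries.ofScalars ℝ fun n => S n / n !) 0 := by
    refine (hasFPowerSeriesOnBall_ofScalars_of_hasSum (r := ⟨π / 4, by positivity⟩)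
      (NNReal.coe_pos.1 (by positivity : (0 : ℝ) < π / 4)) fun t ht => ?_).hasFPowerSeriesAt
    simpa only [div_mul_eq_mul_div] using hS t ht
  have hmoments (n : ℕ) : S n = ∫ x, x ^ n ∂springerMeasure := by
    have hcoeff := congrFun (FormalMultilinearSeries.ofScalars_series_injective ℝ ℝ
      (hS_series.eq_formalMultilinearSeries hasFPowerSeriesAt_one_div_cos_sub_sin_moments)) n
    exact (div_left_inj' (by positivity)).1 hcoeff
  refine ⟨fun n => by rw [hmoments, integral_springerMeasure], springerMeasure, fun n =>
    ⟨integrable_pow_of_mem_interior_integrableExpSet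
      zero_mem_interior_integrableExpSet_springerMeasure n, hmoments n⟩⟩
end
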